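/- For every forest G on n vertices, every integer m with 1 ≤ m ≤ n, and every real c with 0 < c < 1, there is a cut (B,W) in G with c·m < |B| ≤ m and e_G(B,W) ≤ ⌈2c/(1−c)⌉·Δ(G), where Δ(G) is the maximum degree of G. -/

import Mathlib

/-!
The cut is built by repeatedly halving a deficit. In a forest, for every vertex set `P` and
`r ≤ |P|` there is `S ⊆ P` with `r ≤ 2|S|`, `|S| ≤ r` and at most `Δ` edges between `S` and
`P \ S`. Applying this `K = ⌈2c/(1-c)⌉` times, each time to the vertices not chosen yet and the
remaining deficit, yields `B` with `m - |B| ≤ m / 2^K` and at most `KΔ` cut edges; and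
`m / 2^K < (1 - c) m` because `2^K ≥ K + 1 ≥ (1 + c)/(1 - c)`.

For the halving step take `C ⊆ P` of minimal size with `|C| ≥ r` and at most one edge to
`P \ C`, and let `v ∈ C` be the end of that edge (any vertex of `C` if there is none).
If `|C| > r`, each component of `G - v` meets `C - v` in a set with at most one outgoing edge
(it can reach `v` only once, as `G` is acyclic), so by minimality it has fewer than `r`
vertices. A greedy union of these pieces gives `S`, and every edge leaving `S` ends at `v`.
-/

open scoped Classical

namespace MinBisection

noncomputable section

variable {V ι : Type*}

/-- The number of edges of `G` with one endpoint in `B` and the other outside of `B`,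
i.e., the width `e_G(B, W)` of the cut `(B, W)` where `W` is the complement of `B`. -/
def cutWidth (G : SimpleGraph V) (B : Finset V) : ℕ :=
  Nat.card {e : Sym2 V // ∃ x y, G.Adj x y ∧ x ∈ B ∧ y ∉ B ∧ e = s(x, y)}

/-- The number of edges of `G` whose endpoints lie in two different parts of the
partition `(B, W, Z)` of the vertex set. -/
def cutWidth3 (G : SimpleGraph V) (B W Z : Finset V) : ℕ :=
  Nat.card {e : Sym2 V // ∃ x y, G.Adj x y ∧ e = s(x, y) ∧
    ¬ ((x ∈ B ∧ y ∈ B) ∨ (x ∈ W ∧ y ∈ W) ∨ (x ∈ Z ∧ y ∈ Z))}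

/-- `(B, Bᶜ)` is a bisection: the sizes of the two parts differ by at most one. -/
def IsBisection [Fintype V] (B : Finset V) : Prop :=
  B.card ≤ Bᶜ.card + 1 ∧ Bᶜ.card ≤ B.card + 1

/-- The minimum bisection width `MinBis(G)`. -/
def minBis (G : SimpleGraph V) [Fintype V] : ℕ :=
  sInf {k | ∃ B : Finset V, IsBisection B ∧ cutWidth G B = k}

/-- The maximum degree `Δ(G)`. -/
def maxDeg (G : SimpleGraph V) [Fintype V] : ℕ :=
  Finset.univ.sup fun v => Nat.card {u // G.Adj v u}

/-- The number of vertices on a longest path in `G`. -/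
def longestPathCard (G : SimpleGraph V) : ℕ :=
  sSup {k | ∃ (u v : V) (p : G.Walk u v), p.IsPath ∧ k = p.support.length}

/-- The relative diameter `diam*` of a connected graph: the number of vertices on a
longest path divided by the number of vertices. -/
def diamStar (G : SimpleGraph V) [Fintype V] : ℝ :=
  (longestPathCard G : ℝ) / (Fintype.card V : ℝ)

/-- The number of vertices on a longest path contained in the connected component `c`. -/
def compLongestPathCard (G : SimpleGraph V) (c : G.ConnectedComponent) : ℕ :=
  sSup {k | ∃ (u v : V) (p : G.Walk u v), p.IsPath ∧ G.connectedComponentMk u = c ∧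
    k = p.support.length}

/-- The relative diameter `diam*` of a forest: the sum over all connected components of the
number of vertices on a longest path in the component, divided by the number of vertices. -/
def forestDiamStar (G : SimpleGraph V) [Fintype V] : ℝ :=
  letI : Fintype G.ConnectedComponent := Fintype.ofFinite _
  (∑ c : G.ConnectedComponent, (compLongestPathCard G c : ℝ)) / (Fintype.card V : ℝ)

/-- `(T, X)` is a tree decomposition of `G`. -/
structure IsTreeDecomp (G : SimpleGraph V) (T : SimpleGraph ι) (X : ι → Finset V) : Prop where
  isTree : T.IsTree
  mem_cluster : ∀ v : V, ∃ i, v ∈ X i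
  edge_cluster : ∀ ⦃u v : V⦄, G.Adj u v → ∃ i, u ∈ X i ∧ v ∈ X i
  inter_subset : ∀ ⦃i j : ι⦄ (p : T.Walk i j), p.IsPath → ∀ h ∈ p.support, X i ∩ X j ⊆ X h

/-- The weight `w(P, X)` of a path `p` of the tree `T` with respect to the clusters `X`:
the cardinality of the union of the clusters along the path. -/
def walkWeight (X : ι → Finset V) {T : SimpleGraph ι} {i j : ι} (p : T.Walk i j) : ℕ :=
  (p.support.toFinset.biUnion X).card

/-- The relative weight `r(T, X)` of a heaviest path in the tree decomposition `(T, X)`. -/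
def rTD [Fintype V] (T : SimpleGraph ι) (X : ι → Finset V) : ℝ :=
  (↑(sSup {w : ℕ | ∃ (i j : ι) (p : T.Walk i j), p.IsPath ∧ w = walkWeight X p}) : ℝ) /
    (Fintype.card V : ℝ)

/-- The path `p` is nonredundant: one of its two ends `i` is a nonredundant end, i.e.,
`X i ≠ ∅` and no cluster along the path contains the previous one when traversed from `i`. -/
def NonredundantPath (X : ι → Finset V) {T : SimpleGraph ι} {i j : ι} (p : T.Walk i j) : Prop :=
  (X i ≠ ∅ ∧ List.Chain' (fun a b => ¬ X b ⊆ X a) p.support) ∨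
  (X j ≠ ∅ ∧ List.Chain' (fun a b => ¬ X b ⊆ X a) p.reverse.support)

/-- `R_i`: the set of vertices whose path node (first node along `p`, traversed from the
end `i₀`, whose cluster contains the vertex) is `i`. -/
def Rset (X : ι → Finset V) {T : SimpleGraph ι} {i₀ j₀ : ι} (p : T.Walk i₀ j₀) (i : ι) :
    Set V :=
  {x | ∃ (k : ℕ) (hk : k < p.support.length), p.support.get ⟨k, hk⟩ = i ∧ x ∈ X i ∧
    ∀ (l : ℕ) (hl : l < k), x ∉ X (p.support.get ⟨l, hl.trans hk⟩)}

/-- `S_i`: the union of the clusters over the component `T_i` of `T - E(P)` containing `i`,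
minus `R = ⋃_{h ∈ V(P)} X^h`. -/
def Sset (X : ι → Finset V) {T : SimpleGraph ι} {i₀ j₀ : ι} (p : T.Walk i₀ j₀) (i : ι) :
    Set V :=
  {x | (∃ j, (∃ q : T.Walk i j, ∀ e ∈ q.edges, e ∉ p.edges) ∧ x ∈ X j) ∧
    ∀ h ∈ p.support, x ∉ X h}

end

end MinBisection

open Finset

namespace SimpleGraph

variable {V : Type*} {G : SimpleGraph V}

lemma IsAcyclic.not_reachable_deleteIncidenceSet (hG : G.IsAcyclic) {v x y : V}
    (hx : G.Adj v x) (hy : G.Adj v y) (hxy : x ≠ y) :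
    ¬ (G.deleteIncidenceSet v).Reachable x y := by
  intro hreach
  refine isBridge_iff.1 (isAcyclic_iff_forall_adj_isBridge.1 hG hy) ?_
  have hvx : (G.deleteEdges {s(v, y)}).Adj v x := by simp [hx, hxy, hy.ne]
  exact hvx.reachable.trans (hreach.mono (deleteEdges_anti (by simpa using hy)))

variable [DecidableRel G.Adj]

lemma exists_eq_of_card_interedges_le_one {C T : Finset V} (hC : C.Nonempty)
    (h : #(G.interedges C T) ≤ 1) : ∃ v ∈ C, ∀ x ∈ C, ∀ y ∈ T, G.Adj x y → x = v := by
  by_cases hne : (G.interedges C T).Nonempty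
  · obtain ⟨⟨v, w⟩, hvw⟩ := hne
    refine ⟨v, (G.mem_interedges_iff.1 hvw).1, fun x hx y hy hxy => ?_⟩
    exact congrArg Prod.fst (card_le_one.1 h _ (G.mk_mem_interedges_iff.2 ⟨hx, hy, hxy⟩) _ hvw)
  · obtain ⟨v, hv⟩ := hC
    exact ⟨v, hv, fun x hx y hy hxy => (hne ⟨_, G.mk_mem_interedges_iff.2 ⟨hx, hy, hxy⟩⟩).elim⟩

variable [DecidableEq V]

lemma IsAcyclic.card_interedges_singleton_le_one (hG : G.IsAcyclic) {D : Finset V} {v : V}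
    (hD : ∀ x ∈ D, ∀ y ∈ D, (G.deleteIncidenceSet v).Reachable x y) :
    #(G.interedges D {v}) ≤ 1 := by
  refine card_le_one.2 fun ⟨x, v₁⟩ hx ⟨y, v₂⟩ hy => ?_
  simp only [mem_interedges_iff, mem_singleton] at hx hy
  obtain ⟨hxD, rfl, hxv⟩ := hx
  obtain ⟨hyD, rfl, hyv⟩ := hy
  by_contra hne
  exact hG.not_reachable_deleteIncidenceSet hxv.symm hyv.symm (fun h => hne (h ▸ rfl))
    (hD x hxD y hyD)

lemma interedges_sdiff_subset_interedges_singleton {P C S : Finset V} {v : V}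
    (hv : ∀ x ∈ C, ∀ y ∈ P \ C, G.Adj x y → x = v) (hSC : S ⊆ C.erase v)
    (hS : ∀ x ∈ S, ∀ y ∈ C.erase v, G.Adj x y → y ∈ S) :
    G.interedges S (P \ S) ⊆ G.interedges S {v} := by
  rintro ⟨x, y⟩ h
  rw [mk_mem_interedges_iff, mem_sdiff] at h
  obtain ⟨hxS, ⟨hyP, hyS⟩, hxy⟩ := h
  obtain ⟨hxv, hxC⟩ := mem_erase.1 (hSC hxS)
  refine G.mk_mem_interedges_iff.2 ⟨hxS, mem_singleton.2 ?_, hxy⟩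
  by_contra hyv
  by_cases hyC : y ∈ C
  · exact hyS (hS x hxS y (mem_erase.2 ⟨hyv, hyC⟩) hxy)
  · exact hxv (hv x hxC y (mem_sdiff.2 ⟨hyP, hyC⟩) hxy)

end SimpleGraph

lemma Finset.exists_subset_le_two_mul_sum_le {ι : Type*} [DecidableEq ι] (f : ι → ℕ) {r : ℕ}
    (s : Finset ι) (hf : ∀ i ∈ s, f i ≤ r) (hs : r ≤ ∑ i ∈ s, f i) :
    ∃ t ⊆ s, r ≤ 2 * ∑ i ∈ t, f i ∧ ∑ i ∈ t, f i ≤ r := by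
  induction s using Finset.induction_on with
  | empty => exact ⟨∅, empty_subset _, by simpa using hs, by simp⟩
  | insert a s ha ih =>
    rw [sum_insert ha] at hs
    by_cases hsr : r ≤ ∑ i ∈ s, f i
    · obtain ⟨t, hts, ht⟩ := ih (fun i hi => hf i (mem_insert_of_mem hi)) hsr
      exact ⟨t, hts.trans (subset_insert a s), ht⟩
    by_cases h2s : r ≤ 2 * ∑ i ∈ s, f i
    · exact ⟨s, subset_insert a s, h2s, by omega⟩
    by_cases h2a : r ≤ 2 * f a
    · exact ⟨{a}, by simp, by simpa, by simpa using hf a (mem_insert_self a s)⟩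
    · exact ⟨insert a s, Subset.rfl, by rw [sum_insert ha]; omega, by rw [sum_insert ha]; omega⟩

namespace MinBisection

open SimpleGraph

variable {V : Type*} [Fintype V] {G : SimpleGraph V}

lemma degree_le_maxDeg (v : V) : G.degree v ≤ maxDeg G := by
  have : Nat.card {u // G.Adj v u} = G.degree v := by
    rw [← card_neighborSet_eq_degree, ← Nat.card_eq_fintype_card]; rfl
  exact this ▸ le_sup (f := fun v => Nat.card {u // G.Adj v u}) (mem_univ v)

lemma one_le_maxDeg_of_adj {x y : V} (h : G.Adj x y) : 1 ≤ maxDeg G :=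
  lt_of_lt_of_le ((G.degree_pos_iff_exists_adj x).2 ⟨y, h⟩) (degree_le_maxDeg x)

lemma cutWidth_eq_card_interedges (B : Finset V) : cutWidth G B = #(G.interedges B Bᶜ) := by
  have hinj : Set.InjOn (fun e : V × V => s(e.1, e.2)) (G.interedges B Bᶜ) := by
    rintro ⟨x, y⟩ hxy ⟨x', y'⟩ hxy' h
    simp only [mem_coe, mem_interedges_iff, mem_compl] at hxy hxy'
    rcases Sym2.eq_iff.1 h with ⟨rfl, rfl⟩ | ⟨rfl, rfl⟩
    · rfl
    · exact absurd hxy.1 hxy'.2.1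
  rw [← card_image_of_injOn hinj, ← Nat.card_eq_finsetCard, cutWidth]
  refine Nat.card_congr (Equiv.subtypeEquivRight fun e => ?_)
  simp only [mem_image, mem_interedges_iff, mem_compl, Prod.exists]
  grind

lemma card_interedges_le_maxDeg_of_le_one {s t : Finset V} (h : #(G.interedges s t) ≤ 1) :
    #(G.interedges s t) ≤ maxDeg G := by
  rcases (G.interedges s t).eq_empty_or_nonempty with h0 | ⟨⟨x, y⟩, hxy⟩
  · simp [h0]
  · exact h.trans (one_le_maxDeg_of_adj (G.mem_interedges_iff.1 hxy).2.2)

lemma card_interedges_singleton_le_maxDeg (S : Finset V) (v : V) :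
    #(G.interedges S {v}) ≤ maxDeg G := by
  calc #(G.interedges S {v}) ≤ #(G.neighborFinset v) := by
        refine card_le_card_of_injOn Prod.fst (fun e he => ?_) fun e he e' he' h => ?_
        · simp only [mem_coe, mem_interedges_iff, mem_singleton] at he
          simpa [he.2.1] using he.2.2.symm
        · simp only [mem_coe, mem_interedges_iff, mem_singleton] at he he'
          exact Prod.ext h (he.2.1.trans he'.2.1.symm)
    _ = G.degree v := card_neighborFinset_eq_degree G v
    _ ≤ maxDeg G := degree_le_maxDeg v

lemma one_lt_one_sub_mul_two_pow_ceil {c : ℝ} (hc0 : 0 < c) (hc1 : c < 1) :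
    1 < (1 - c) * 2 ^ ⌈2 * c / (1 - c)⌉₊ := by
  set K := ⌈2 * c / (1 - c)⌉₊
  have h1c : 0 < 1 - c := by linarith
  have hK : 2 * c ≤ K * (1 - c) := (div_le_iff₀ h1c).1 (Nat.le_ceil _)
  have hpow : (K : ℝ) + 1 ≤ 2 ^ K := by exact_mod_cast Nat.lt_two_pow_self
  nlinarith

lemma mul_lt_of_two_pow_mul_sub_le {c : ℝ} {K m b : ℕ} (hc : 1 < (1 - c) * 2 ^ K)
    (hm : 1 ≤ m) (hbm : b ≤ m) (h : 2 ^ K * (m - b) ≤ m) : c * m < b := by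
  have h' : (2 : ℝ) ^ K * ((m : ℝ) - b) ≤ m := by
    rw [← Nat.cast_sub hbm]; exact_mod_cast h
  have hm' : (1 : ℝ) ≤ m := by exact_mod_cast hm
  have h2 : (0 : ℝ) < 2 ^ K := by positivity
  rcases hbm.eq_or_lt with rfl | hlt
  · nlinarith
  · have hlt' : (0 : ℝ) < m - b := by rw [sub_pos]; exact_mod_cast hlt
    nlinarith [mul_lt_mul_of_pos_right hc hlt']

lemma exists_halving_cut_of_forall_adj_eq (hG : G.IsAcyclic) {P C : Finset V} {v : V} {r : ℕ}
    (hv : ∀ x ∈ C, ∀ y ∈ P \ C, G.Adj x y → x = v) (hrC : r ≤ #(C.erase v))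
    (hsmall : ∀ D ⊆ C.erase v, #(G.interedges D (P \ D)) ≤ 1 → #D < r) :
    ∃ S ⊆ C.erase v, r ≤ 2 * #S ∧ #S ≤ r ∧ #(G.interedges S (P \ S)) ≤ maxDeg G := by
  set H := G.deleteIncidenceSet v
  let piece (s : Finset H.ConnectedComponent) : Finset V :=
    {a ∈ C.erase v | H.connectedComponentMk a ∈ s}
  have hcut (s) : G.interedges (piece s) (P \ piece s) ⊆ G.interedges (piece s) {v} := by
    refine interedges_sdiff_subset_interedges_singleton hv (filter_subset _ _)
      fun x hx y hy hxy => ?_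
    obtain ⟨hxW, hxs⟩ := mem_filter.1 hx
    have hHxy : H.Adj x y := deleteIncidenceSet_adj.2 ⟨hxy, ne_of_mem_erase hxW, ne_of_mem_erase hy⟩
    exact mem_filter.2 ⟨hy, ConnectedComponent.sound hHxy.reachable ▸ hxs⟩
  have hcard (s) : #(piece s) = ∑ c ∈ s, #(piece {c}) := by
    refine (card_eq_sum_card_fiberwise (f := H.connectedComponentMk) (t := s)
      fun x hx => (mem_filter.1 hx).2).trans (sum_congr rfl ?_)
    refine fun c hc => congrArg card ?_
    ext x
    simp only [piece, mem_filter, mem_singleton, and_assoc]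
    exact and_congr_right fun _ => ⟨And.right, fun h => ⟨h ▸ hc, h⟩⟩
  have hpiece (c) : #(piece {c}) ≤ r := by
    refine (hsmall _ (filter_subset _ _) ((card_le_card (hcut {c})).trans ?_)).le
    refine hG.card_interedges_singleton_le_one fun x hx y hy => ConnectedComponent.exact ?_
    simp only [piece, mem_filter, mem_singleton] at hx hy
    rw [hx.2, hy.2]
  have huniv : piece univ = C.erase v := filter_true_of_mem fun _ _ => mem_univ _
  obtain ⟨t, -, ht2, htr⟩ := exists_subset_le_two_mul_sum_le (fun c => #(piece {c})) univ
    (fun c _ => hpiece c) (by rw [← hcard, huniv]; exact hrC)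
  refine ⟨piece t, filter_subset _ _, by rwa [hcard], by rwa [hcard], ?_⟩
  exact (card_le_card (hcut t)).trans (card_interedges_singleton_le_maxDeg _ _)

lemma exists_halving_cut (hG : G.IsAcyclic) (P : Finset V) {r : ℕ} (hrP : r ≤ #P) :
    ∃ S ⊆ P, r ≤ 2 * #S ∧ #S ≤ r ∧ #(G.interedges S (P \ S)) ≤ maxDeg G := by
  obtain ⟨C, hC, hmin⟩ := exists_min_image
    {C ∈ P.powerset | r ≤ #C ∧ #(G.interedges C (P \ C)) ≤ 1} card
    ⟨P, mem_filter.2 ⟨mem_powerset_self P, hrP, by simp [interedges_def]⟩⟩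
  simp only [mem_filter, mem_powerset, and_imp] at hC hmin
  obtain ⟨hCP, hrC, hC1⟩ := hC
  rcases hrC.eq_or_lt with hrC | hrC
  · exact ⟨C, hCP, by omega, hrC.ge, card_interedges_le_maxDeg_of_le_one hC1⟩
  obtain ⟨v, hvC, hv⟩ := exists_eq_of_card_interedges_le_one (card_pos.1 (by omega)) hC1
  have hCv := card_erase_of_mem hvC
  have hsmall : ∀ D ⊆ C.erase v, #(G.interedges D (P \ D)) ≤ 1 → #D < r := fun D hD hD1 => by
    by_contra! hrD
    have := hmin D (hD.trans ((erase_subset v C).trans hCP)) hrD hD1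
    have := card_le_card hD
    omega
  obtain ⟨S, hS, hSr⟩ := exists_halving_cut_of_forall_adj_eq hG hv (by omega) hsmall
  exact ⟨S, hS.trans ((erase_subset v C).trans hCP), hSr⟩

lemma exists_iterated_halving_cut (hG : G.IsAcyclic) (t : ℕ) (P : Finset V) {r : ℕ}
    (hrP : r ≤ #P) :
    ∃ S ⊆ P, #S ≤ r ∧ 2 ^ t * (r - #S) ≤ r ∧ #(G.interedges S (P \ S)) ≤ t * maxDeg G := by
  induction t generalizing P r with
  | zero => exact ⟨∅, empty_subset _, Nat.zero_le _, by simp, by simp⟩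
  | succ t ih =>
    obtain ⟨S₁, hS₁P, hrS₁, hS₁r, hS₁⟩ := exists_halving_cut hG P hrP
    obtain ⟨S₂, hS₂, hS₂r, hpow, hS₂cut⟩ :=
      ih (P \ S₁) (r := r - #S₁) (by rw [card_sdiff_of_subset hS₁P]; omega)
    have hdisj : Disjoint S₁ S₂ := disjoint_of_subset_right hS₂ disjoint_sdiff
    have hsub : G.interedges (S₁ ∪ S₂) (P \ (S₁ ∪ S₂)) ⊆
        G.interedges S₁ (P \ S₁) ∪ G.interedges S₂ ((P \ S₁) \ S₂) := by
      rintro ⟨x, y⟩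
      simp only [mem_union, mk_mem_interedges_iff, mem_sdiff]
      tauto
    refine ⟨S₁ ∪ S₂, union_subset hS₁P (hS₂.trans sdiff_subset), ?_, ?_, ?_⟩
    · rw [card_union_of_disjoint hdisj]; omega
    · rw [card_union_of_disjoint hdisj, pow_succ, Nat.sub_add_eq]
      calc 2 ^ t * 2 * (r - #S₁ - #S₂) = 2 * (2 ^ t * (r - #S₁ - #S₂)) := by ring
        _ ≤ r := by omega
    · calc _ ≤ #(G.interedges S₁ (P \ S₁)) + #(G.interedges S₂ ((P \ S₁) \ S₂)) :=
            (card_le_card hsub).trans (card_union_le _ _)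
        _ ≤ (t + 1) * maxDeg G := (add_le_add hS₁ hS₂cut).trans_eq (by ring)

end MinBisection

/-- (Approximate cut in forests.) For every forest `G` on `n` vertices,
every integer `1 ≤ m ≤ n`, and every real `0 < c < 1`, there is a cut `(B, W)` in `G` with
`c m < |B| ≤ m` and `e_G(B, W) ≤ ⌈2c/(1-c)⌉ Δ(G)`. -/
theorem MinBisection.approx_cut_forest {V : Type*} [Fintype V] (G : SimpleGraph V)
    (hF : G.IsAcyclic) (m : ℕ) (hm1 : 1 ≤ m) (hmn : m ≤ Fintype.card V)
    (c : ℝ) (hc0 : 0 < c) (hc1 : c < 1) :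
    ∃ B : Finset V, c * (m : ℝ) < (B.card : ℝ) ∧ B.card ≤ m ∧
      cutWidth G B ≤ ⌈2 * c / (1 - c)⌉₊ * maxDeg G := by
  obtain ⟨B, -, hBm, hpow, hcut⟩ :=
    exists_iterated_halving_cut hF ⌈2 * c / (1 - c)⌉₊ Finset.univ (r := m) (by simpa using hmn)
  refine ⟨B, mul_lt_of_two_pow_mul_sub_le (one_lt_one_sub_mul_two_pow_ceil hc0 hc1) hm1 hBm hpow,
    hBm, ?_⟩
  rwa [cutWidth_eq_card_interedges, Finset.compl_eq_univ_sdiff]
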